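/- arXiv:2310.06242 — 2 statements merged into one kernel-verified Lean document; each statement's English description precedes it below -/
import Mathlib

section
/- Define the value function V(a_e, a_t) := (a_t² σ²/a_e²)(τ*)²ρ(τ*) if a_e/σ ≥ τ*, and V(a_e, a_t) := a_t² ρ(a_e/σ) if 0 ≤ a_e/σ < τ* (these are the worst-case mean square regrets of the minimax rules of the one-dimensional subproblems). Then sup over {(a_e, a_t) : a_e ≥ 0, a_e − k ≤ a_t ≤ a_e + k} of V(a_e, a_t) equals σ²(a* + k/σ)² ρ(a*), and this supremum is attained at a_e = a*σ, a_t = a*σ + k. -/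
open Real MeasureTheory

noncomputable def gaussPdf (x : ℝ) : ℝ :=
  (Real.sqrt (2 * Real.pi))⁻¹ * Real.exp (-(x ^ 2) / 2)

noncomputable def ρ (a : ℝ) : ℝ :=
  ∫ y : ℝ, (1 / (Real.exp (2 * a * y) + 1)) ^ 2 * gaussPdf (y - a)

lemma gaussPdf_pos (x : ℝ) : 0 < gaussPdf x := by
  unfold gaussPdf
  positivity

lemma ρ_nonneg (a : ℝ) : 0 ≤ ρ a := by
  apply integral_nonneg
  intro y
  have := gaussPdf_pos (y - a)
  positivity

lemma gaussPdf_continuous : Continuous gaussPdf := by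
  unfold gaussPdf; continuity

lemma gaussPdf_integrable : Integrable gaussPdf := by
  have h : gaussPdf = fun x => (Real.sqrt (2 * Real.pi))⁻¹ * Real.exp (-(1/2 : ℝ) * x ^ 2) := by
    funext x; unfold gaussPdf; ring_nf
  rw [h]
  exact (integrable_exp_neg_mul_sq (by norm_num)).const_mul _

lemma ρ_one_pos : 0 < ρ 1 := by
  have hint : Integrable (fun y : ℝ => (1 / (Real.exp (2 * 1 * y) + 1)) ^ 2 * gaussPdf (y - 1)) := by
    apply Integrable.mono (gaussPdf_integrable.comp_sub_right 1)
    · apply Continuous.aestronglyMeasurable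
      apply Continuous.mul
      · apply Continuous.pow
        apply Continuous.div continuous_const
        · continuity
        · intro y; positivity
      · exact gaussPdf_continuous.comp (by continuity)
    · filter_upwards with y
      have h1 : 0 < Real.exp (2 * 1 * y) + 1 := by positivity
      have h2 : (1 / (Real.exp (2 * 1 * y) + 1)) ^ 2 ≤ 1 := by
        rw [pow_le_one_iff_of_nonneg (by positivity) two_ne_zero]
        rw [div_le_one h1]
        nlinarith [Real.exp_pos (2 * 1 * y)]
      have hg := gaussPdf_pos (y - 1)
      rw [Real.norm_eq_abs, Real.norm_eq_abs, abs_of_pos hg, abs_of_nonneg (by positivity)]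
      nlinarith
  rw [ρ]
  rw [integral_pos_iff_support_of_nonneg _ hint]
  · have : Function.support (fun y : ℝ => (1 / (Real.exp (2 * 1 * y) + 1)) ^ 2 * gaussPdf (y - 1)) = Set.univ := by
      ext y
      simp only [Function.mem_support, Set.mem_univ, iff_true]
      have := gaussPdf_pos (y - 1)
      have h1 : 0 < Real.exp (2 * 1 * y) + 1 := by positivity
      positivity
    rw [this]
    simp
  · intro y
    have := gaussPdf_pos (y - 1)
    positivity

/-- The supremum over feasible (a_e, a_t) (with a_e ≥ 0, a_e − k ≤ a_t ≤ a_e + k) of the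
worst-case mean square regrets V of the minimax rules of the one-dimensional subproblems
equals σ²(a* + k/σ)²ρ(a*), attained at a_e = a*σ, a_t = a*σ + k. -/
theorem stmt_7 (σ k τstar astar : ℝ) (hσ : 0 < σ) (hk : 0 < k)
    (hτ0 : 0 ≤ τstar)
    (hτmax : ∀ τ : ℝ, 0 ≤ τ → τ ^ 2 * ρ τ ≤ τstar ^ 2 * ρ τstar)
    (ha : astar ∈ Set.Icc 0 τstar)
    (hamax : ∀ a ∈ Set.Icc 0 τstar,
      (a + k / σ) ^ 2 * ρ a ≤ (astar + k / σ) ^ 2 * ρ astar)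
    (V : ℝ → ℝ → ℝ)
    (hV : ∀ aE aT, V aE aT =
      if τstar ≤ aE / σ then (aT ^ 2 * σ ^ 2 / aE ^ 2) * (τstar ^ 2 * ρ τstar)
      else aT ^ 2 * ρ (aE / σ)) :
    (∀ aE aT, 0 ≤ aE → aE - k ≤ aT → aT ≤ aE + k →
      V aE aT ≤ σ ^ 2 * (astar + k / σ) ^ 2 * ρ astar) ∧
    V (astar * σ) (astar * σ + k) = σ ^ 2 * (astar + k / σ) ^ 2 * ρ astar := by
  obtain ⟨ha0, haτ⟩ := ha
  have hρa := ρ_nonneg astar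
  have hRHS : 0 ≤ σ ^ 2 * (astar + k / σ) ^ 2 * ρ astar := by positivity
  have hτpos : 0 < τstar := by
    rcases lt_or_eq_of_le hτ0 with h | h
    · exact h
    · exfalso
      have := hτmax 1 zero_le_one
      rw [← h] at this
      simp at this
      nlinarith [ρ_one_pos]
  constructor
  · intro aE aT haE h1 h2
    have haT2 : aT ^ 2 ≤ (aE + k) ^ 2 := by nlinarith
    rw [hV]
    split_ifs with hc
    · -- τstar ≤ aE / σ, so aE ≥ σ τstar > 0
      have haE' : σ * τstar ≤ aE := by
        rw [mul_comm]; exact (le_div_iff₀ hσ).mp hc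
      have haEpos : 0 < aE := lt_of_lt_of_le (by positivity) haE'
      have hρτ := ρ_nonneg τstar
      -- V = aT²σ²/aE² · τ*²ρτ* ≤ (aE+k)²σ²/aE² · τ*²ρτ* ≤ σ²(τ*+k/σ)²ρτ*
      have key : (aE + k) ^ 2 * σ ^ 2 / aE ^ 2 * (τstar ^ 2 * ρ τstar)
          ≤ σ ^ 2 * (τstar + k / σ) ^ 2 * ρ τstar := by
        rw [div_mul_eq_mul_div, div_le_iff₀ (by positivity)]
        have expand : σ ^ 2 * (τstar + k / σ) ^ 2 = (σ * τstar + k) ^ 2 := by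
          field_simp
        rw [expand]
        have h3 : (aE + k) * (σ * τstar) ≤ (σ * τstar + k) * aE := by nlinarith
        have hsq : ((aE + k) * (σ * τstar)) ^ 2 ≤ ((σ * τstar + k) * aE) ^ 2 := by
          have hAB : (0:ℝ) ≤ (aE + k) * (σ * τstar) := by positivity
          nlinarith
        nlinarith [mul_le_mul_of_nonneg_right hsq hρτ]
      have step1 : aT ^ 2 * σ ^ 2 / aE ^ 2 * (τstar ^ 2 * ρ τstar)
          ≤ (aE + k) ^ 2 * σ ^ 2 / aE ^ 2 * (τstar ^ 2 * ρ τstar) := by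
        apply mul_le_mul_of_nonneg_right _ (mul_nonneg (sq_nonneg _) hρτ)
        gcongr
      have step2 : σ ^ 2 * (τstar + k / σ) ^ 2 * ρ τstar ≤ σ ^ 2 * (astar + k / σ) ^ 2 * ρ astar := by
        rw [mul_assoc, mul_assoc]
        exact mul_le_mul_of_nonneg_left (hamax τstar ⟨hτ0, le_refl _⟩) (sq_nonneg σ)
      linarith
    · push_neg at hc
      have hmem : aE / σ ∈ Set.Icc 0 τstar := ⟨by positivity, le_of_lt hc⟩
      have hρ := ρ_nonneg (aE / σ)
      have hb := hamax _ hmem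
      have : aT ^ 2 * ρ (aE / σ) ≤ σ ^ 2 * (aE / σ + k / σ) ^ 2 * ρ (aE / σ) := by
        have : σ ^ 2 * (aE / σ + k / σ) ^ 2 = (aE + k) ^ 2 := by
          field_simp
        rw [this]
        exact mul_le_mul_of_nonneg_right haT2 hρ
      calc aT ^ 2 * ρ (aE / σ) ≤ σ ^ 2 * (aE / σ + k / σ) ^ 2 * ρ (aE / σ) := this
        _ ≤ σ ^ 2 * (astar + k / σ) ^ 2 * ρ astar := by
            rw [mul_assoc, mul_assoc]
            exact mul_le_mul_of_nonneg_left hb (sq_nonneg σ)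
  · rw [hV]
    have hdiv : astar * σ / σ = astar := by field_simp
    rw [hdiv]
    split_ifs with hc
    · -- astar = τstar > 0
      have heq : astar = τstar := le_antisymm haτ hc
      have hapos : 0 < astar := heq ▸ hτpos
      rw [← heq]
      field_simp
    · field_simp
end

section
/- The worst-case mean square regret of the rule δ_H* over Θ admits the following one-dimensional representation: sup_{(θ_e,θ_t)∈Θ} R_sq(δ_H*, θ_e, θ_t) = σ² · sup_{ã ≥ −k/σ} (ã + k/σ)² ρ*(ã). -/
open Real MeasureTheory

/-- Mean square regret in the two-dimensional partially identified problem: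
data X ~ N(θ_e, σ²), target effect θ_t. -/
noncomputable def Rsq (σ : ℝ) (δ : ℝ → ℝ) (θe θt : ℝ) : ℝ :=
  θt ^ 2 *
    ∫ x : ℝ, ((if 0 ≤ θt then (1 : ℝ) else 0) - δ x) ^ 2 *
      (σ⁻¹ * gaussPdf ((x - θe) / σ))

/-- The parameter space Θ = {(θ_e, θ_t) : θ_e − k ≤ θ_t ≤ θ_e + k}. -/
def Θset (k : ℝ) : Set (ℝ × ℝ) := {p | p.1 - k ≤ p.2 ∧ p.2 ≤ p.1 + k}

/-- ρ*(θ) = ∫ (1/(exp(2a*y)+1))² φ(y−θ) dy, the logistic weight frozen at a*. -/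
noncomputable def ρstar (astar θ : ℝ) : ℝ :=
  ∫ y : ℝ, (1 / (Real.exp (2 * astar * y) + 1)) ^ 2 * gaussPdf (y - θ)

/-!
For a logistic rule the regret at `(θ_e, θ_t)` depends only on `θ_t²` and on the standardized
mean `θ_e / σ`, with the sign of `θ_t` deciding whether the loss weight is `(1 - δ)²` or `δ²`.
Substituting `y = x / σ`, and `y = -x / σ` when `θ_t < 0`, turns the regret into
`θ_t² ρ*(±θ_e / σ)`. On `Θ` the factor `θ_t²` is at most `(k ± θ_e)²`, with equality on the
edge `θ_t = θ_e + k`, so both suprema run over the same values `σ² (ã + k/σ)² ρ*(ã)`,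
`ã ≥ -k/σ`.
-/

lemma gaussPdf_nonneg (x : ℝ) : 0 ≤ gaussPdf x := by
  unfold gaussPdf; positivity

lemma gaussPdf_neg (x : ℝ) : gaussPdf (-x) = gaussPdf x := by
  simp [gaussPdf]

lemma ρstar_nonneg (astar θ : ℝ) : 0 ≤ ρstar astar θ :=
  integral_nonneg fun _ => mul_nonneg (sq_nonneg _) (gaussPdf_nonneg _)

lemma integral_mul_gaussPdf_div {σ : ℝ} (hσ : 0 < σ) (g : ℝ → ℝ) (θ : ℝ) :
    ∫ x, g (x / σ) * (σ⁻¹ * gaussPdf ((x - θ) / σ)) = ∫ y, g y * gaussPdf (y - θ / σ) := by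
  have h : ∀ x, g (x / σ) * (σ⁻¹ * gaussPdf ((x - θ) / σ))
      = σ⁻¹ * (fun y => g y * gaussPdf (y - θ / σ)) (x / σ) := by
    intro x
    rw [sub_div]
    ring
  simp only [h]
  rw [integral_const_mul, Measure.integral_comp_div (fun y => g y * gaussPdf (y - θ / σ)),
    abs_of_pos hσ, smul_eq_mul, inv_mul_cancel_left₀ hσ.ne']

lemma one_sub_logistic_sq (x : ℝ) :
    (1 - exp x / (exp x + 1)) ^ 2 = (1 / (exp x + 1)) ^ 2 := by
  have : exp x + 1 ≠ 0 := by positivity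
  field_simp
  ring

lemma zero_sub_logistic_sq (x : ℝ) :
    (0 - exp x / (exp x + 1)) ^ 2 = (1 / (exp (-x) + 1)) ^ 2 := by
  rw [exp_neg]
  have : exp x + 1 ≠ 0 := by positivity
  field_simp
  ring

section LogisticRule

variable {σ astar : ℝ} {δH : ℝ → ℝ}

lemma Rsq_logistic_of_nonneg (hσ : 0 < σ)
    (hδH : ∀ x, δH x = exp (2 * astar * x / σ) / (exp (2 * astar * x / σ) + 1))
    (θe : ℝ) {θt : ℝ} (hθt : 0 ≤ θt) :
    Rsq σ δH θe θt = θt ^ 2 * ρstar astar (θe / σ) := by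
  have hloss : ∀ x, ((if 0 ≤ θt then (1 : ℝ) else 0) - δH x) ^ 2
      = (1 / (exp (2 * astar * (x / σ)) + 1)) ^ 2 := by
    intro x
    rw [if_pos hθt, hδH, one_sub_logistic_sq, mul_div_assoc]
  simp only [Rsq, hloss]
  rw [integral_mul_gaussPdf_div hσ (fun y => (1 / (exp (2 * astar * y) + 1)) ^ 2), ρstar]

lemma Rsq_logistic_of_neg (hσ : 0 < σ)
    (hδH : ∀ x, δH x = exp (2 * astar * x / σ) / (exp (2 * astar * x / σ) + 1))
    (θe : ℝ) {θt : ℝ} (hθt : θt < 0) :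
    Rsq σ δH θe θt = θt ^ 2 * ρstar astar (-(θe / σ)) := by
  set w : ℝ → ℝ := fun y => (1 / (exp (2 * astar * y) + 1)) ^ 2
  have hloss : ∀ x, ((if 0 ≤ θt then (1 : ℝ) else 0) - δH x) ^ 2 = w (-(x / σ)) := by
    intro x
    rw [if_neg hθt.not_ge, hδH, zero_sub_logistic_sq, mul_div_assoc, ← mul_neg]
  simp only [Rsq, hloss]
  rw [integral_mul_gaussPdf_div hσ (fun y => w (-y)), ← integral_neg_eq_self, ρstar]
  congr 2
  ext y
  rw [neg_neg, show -y - θe / σ = -(y - -(θe / σ)) by ring, gaussPdf_neg]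

lemma exists_Rsq_logistic_le (hσ : 0 < σ)
    (hδH : ∀ x, δH x = exp (2 * astar * x / σ) / (exp (2 * astar * x / σ) + 1))
    {k θe θt : ℝ} (hθ : (θe, θt) ∈ Θset k) :
    ∃ b ∈ Set.Ici (-(k / σ)), Rsq σ δH θe θt ≤ σ ^ 2 * ((b + k / σ) ^ 2 * ρstar astar b) := by
  obtain ⟨hlo, hhi⟩ : θe - k ≤ θt ∧ θt ≤ θe + k := hθ
  have hscale : ∀ b, σ ^ 2 * ((b + k / σ) ^ 2 * ρstar astar b)
      = (σ * b + k) ^ 2 * ρstar astar b := by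
    intro b
    field_simp
  rcases le_or_gt 0 θt with hθt | hθt
  · refine ⟨θe / σ, ?_, ?_⟩
    · rw [Set.mem_Ici, ← neg_div]
      gcongr
      linarith
    · rw [Rsq_logistic_of_nonneg hσ hδH θe hθt, hscale, mul_div_cancel₀ _ hσ.ne']
      exact mul_le_mul_of_nonneg_right (sq_le_sq' (by linarith) hhi) (ρstar_nonneg _ _)
  · refine ⟨-(θe / σ), ?_, ?_⟩
    · rw [Set.mem_Ici, neg_le_neg_iff]
      gcongr
      linarith
    · rw [Rsq_logistic_of_neg hσ hδH θe hθt, hscale, mul_neg, mul_div_cancel₀ _ hσ.ne']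
      exact mul_le_mul_of_nonneg_right (sq_le_sq' (by linarith) (by linarith))
        (ρstar_nonneg _ _)

lemma Rsq_logistic_edge (hσ : 0 < σ)
    (hδH : ∀ x, δH x = exp (2 * astar * x / σ) / (exp (2 * astar * x / σ) + 1))
    {k b : ℝ} (hb : -(k / σ) ≤ b) :
    Rsq σ δH (σ * b) (σ * b + k) = σ ^ 2 * ((b + k / σ) ^ 2 * ρstar astar b) := by
  have hedge : 0 ≤ σ * b + k := by
    have := mul_le_mul_of_nonneg_left hb hσ.le
    rwa [mul_neg, mul_div_cancel₀ _ hσ.ne', neg_le_iff_add_nonneg] at this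
  rw [Rsq_logistic_of_nonneg hσ hδH _ hedge, mul_div_cancel_left₀ _ hσ.ne']
  field_simp

end LogisticRule

theorem stmt_11_general (σ k astar : ℝ) (hσ : 0 < σ) (hk : 0 < k)
    (δH : ℝ → ℝ)
    (hδH : ∀ x, δH x =
      Real.exp (2 * astar * x / σ) / (Real.exp (2 * astar * x / σ) + 1)) :
    (⨆ p : Θset k, Rsq σ δH p.1.1 p.1.2) =
      σ ^ 2 * ⨆ a : Set.Ici (-(k / σ)), ((a : ℝ) + k / σ) ^ 2 * ρstar astar a := by
  rw [Real.mul_iSup_of_nonneg (sq_nonneg σ)]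
  apply csSup_eq_csSup_of_forall_exists_le
  · rintro _ ⟨⟨⟨θe, θt⟩, hθ⟩, rfl⟩
    obtain ⟨b, hb, hle⟩ := exists_Rsq_logistic_le hσ hδH hθ
    exact ⟨_, ⟨⟨b, hb⟩, rfl⟩, hle⟩
  · rintro _ ⟨⟨b, hb⟩, rfl⟩
    have hedge : (σ * b, σ * b + k) ∈ Θset k := ⟨by dsimp only; linarith, le_rfl⟩
    exact ⟨_, ⟨⟨_, hedge⟩, rfl⟩, (Rsq_logistic_edge hσ hδH hb).ge⟩

/-- One-dimensional representation of the worst-case mean square regret of δ_H* over Θ: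
it equals σ² · sup_{ã ≥ −k/σ} (ã + k/σ)² ρ*(ã). -/
theorem stmt_11 (σ k τstar astar : ℝ) (hσ : 0 < σ) (hk : 0 < k)
    (hτ0 : 0 ≤ τstar)
    (hτmax : ∀ τ : ℝ, 0 ≤ τ → τ ^ 2 * ρ τ ≤ τstar ^ 2 * ρ τstar)
    (ha : astar ∈ Set.Icc 0 τstar)
    (hamax : ∀ a ∈ Set.Icc 0 τstar,
      (a + k / σ) ^ 2 * ρ a ≤ (astar + k / σ) ^ 2 * ρ astar)
    (δH : ℝ → ℝ)
    (hδH : ∀ x, δH x =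
      Real.exp (2 * astar * x / σ) / (Real.exp (2 * astar * x / σ) + 1)) :
    (⨆ p : Θset k, Rsq σ δH p.1.1 p.1.2) =
      σ ^ 2 * ⨆ a : Set.Ici (-(k / σ)), ((a : ℝ) + k / σ) ^ 2 * ρstar astar a :=
  stmt_11_general σ k astar hσ hk δH hδH
end
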